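/- arXiv:1307.0098 — 4 statements merged into one kernel-verified Lean document; each statement's English description precedes it below -/
import Mathlib

section
/- Let η : ℤ² → A with A finite, and let S ⊂ ℤ² be finite with a subset w ⊂ S such that D_η(S∖w) > D_η(S). Then the number of η-colorings of S∖w that extend non-uniquely to an η-coloring of S is at most |w ∩ S| − 1. -/
/-
The restriction map `π : W_η(S) → W_η(S ∖ w)` is onto, and each coloring of `S ∖ w`
that extends non-uniquely has at least two preimages. Counting fibres,
`P_η(S) ≥ P_η(S ∖ w) + #{non-unique extensions}`, while `|S| = |S ∖ w| + |w|`; so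
`D_η(S ∖ w) > D_η(S)` forces fewer than `|w|` non-unique extensions.
-/

noncomputable def Pcx {A : Type*} (η : ℤ × ℤ → A) (S : Finset (ℤ × ℤ)) : ℕ :=
  Set.ncard {g : S → A | ∃ u : ℤ × ℤ, ∀ x : S, g x = η ((x : ℤ × ℤ) + u)}

noncomputable def Dcx {A : Type*} (η : ℤ × ℤ → A) (S : Finset (ℤ × ℤ)) : ℤ :=
  (Pcx η S : ℤ) - S.card

open Finset in
theorem Finset.card_image_add_card_nontrivialFibers_le {α β : Type*} [DecidableEq β]
    (s : Finset α) (f : α → β) :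
    #(s.image f) + #{b ∈ s.image f | 1 < #{a ∈ s | f a = b}} ≤ #s := by
  rw [card_eq_sum_card_image f s, card_filter, card_eq_sum_ones, ← sum_add_distrib]
  refine sum_le_sum fun b hb => ?_
  obtain ⟨a, ha, rfl⟩ := mem_image.1 hb
  have : 0 < #{a' ∈ s | f a' = f a} := card_pos.2 ⟨a, mem_filter.2 ⟨ha, rfl⟩⟩
  split_ifs <;> omega

open Finset in
theorem Set.ncard_image_add_ncard_nontrivialFibers_le {α β : Type*} {s : Set α} (hs : s.Finite)
    (f : α → β) :
    (f '' s).ncard + {b | ∃ x ∈ s, ∃ y ∈ s, x ≠ y ∧ f x = b ∧ f y = b}.ncard ≤ s.ncard := by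
  classical
  obtain ⟨t, rfl⟩ := hs.exists_finset_coe
  have hfibres : {b | ∃ x ∈ (t : Set α), ∃ y ∈ (t : Set α), x ≠ y ∧ f x = b ∧ f y = b} ⊆
      ↑{b ∈ t.image f | 1 < #{a ∈ t | f a = b}} := by
    rintro b ⟨x, hx, y, hy, hxy, rfl, hyx⟩
    rw [mem_coe, mem_filter, one_lt_card]
    exact ⟨Finset.mem_image_of_mem f hx, x, mem_filter.2 ⟨hx, rfl⟩, y, mem_filter.2 ⟨hy, hyx⟩, hxy⟩
  calc _ ≤ #(t.image f) + #{b ∈ t.image f | 1 < #{a ∈ t | f a = b}} := by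
        rw [← coe_image, Set.ncard_coe_finset]
        exact Nat.add_le_add_left
          ((Set.ncard_le_ncard hfibres (finite_toSet _)).trans_eq (Set.ncard_coe_finset _)) _
    _ ≤ #t := card_image_add_card_nontrivialFibers_le t f
    _ = (t : Set α).ncard := (Set.ncard_coe_finset t).symm

def colorings {A : Type*} (η : ℤ × ℤ → A) (S : Finset (ℤ × ℤ)) : Set (S → A) :=
  {g | ∃ u : ℤ × ℤ, ∀ x : S, g x = η ((x : ℤ × ℤ) + u)}

theorem Pcx_eq_ncard_colorings {A : Type*} (η : ℤ × ℤ → A) (S : Finset (ℤ × ℤ)) :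
    Pcx η S = (colorings η S).ncard := rfl

theorem image_restrict₂_colorings {A : Type*} (η : ℤ × ℤ → A) {S T : Finset (ℤ × ℤ)}
    (hTS : T ⊆ S) : Finset.restrict₂ (π := fun _ => A) hTS '' colorings η S = colorings η T := by
  ext g
  constructor
  · rintro ⟨_, ⟨u, hu⟩, rfl⟩
    exact ⟨u, fun x => hu _⟩
  · rintro ⟨u, hu⟩
    exact ⟨fun x => η (x + u), ⟨u, fun _ => rfl⟩, funext fun x => (hu x).symm⟩

theorem Pcx_add_ncard_nonuniqueExtensions_le {A : Type*} [Finite A] (η : ℤ × ℤ → A)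
    {S T : Finset (ℤ × ℤ)} (hTS : T ⊆ S) :
    Pcx η T + Set.ncard {g : T → A | ∃ u v : ℤ × ℤ,
        (∀ x : T, g x = η ((x : ℤ × ℤ) + u)) ∧ (∀ x : T, g x = η ((x : ℤ × ℤ) + v)) ∧
          ∃ y ∈ S, η (y + u) ≠ η (y + v)} ≤ Pcx η S := by
  rw [Pcx_eq_ncard_colorings, Pcx_eq_ncard_colorings, ← image_restrict₂_colorings η hTS]
  refine le_trans ?_ (Set.ncard_image_add_ncard_nontrivialFibers_le (Set.toFinite _)
    (Finset.restrict₂ (π := fun _ => A) hTS))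
  refine Nat.add_le_add_left (Set.ncard_le_ncard ?_ (Set.toFinite _)) _
  rintro g ⟨u, v, hu, hv, y, hy, hne⟩
  exact ⟨_, ⟨u, fun _ => rfl⟩, _, ⟨v, fun _ => rfl⟩, fun h => hne (congrFun h ⟨y, hy⟩),
    funext fun x => (hu x).symm, funext fun x => (hv x).symm⟩

/-- if D_η(S∖w) > D_η(S) then the number of η-colorings of S∖w that
extend non-uniquely to an η-coloring of S is at most |w ∩ S| − 1.  A coloring of
S∖w extends non-uniquely if two translates of η realize it on S∖w but differ
somewhere on S. -/
theorem stmt_5 {A : Type*} [Fintype A] (η : ℤ × ℤ → A) (S w : Finset (ℤ × ℤ))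
    (hw : w ⊆ S) (hD : Dcx η S < Dcx η (S \ w)) :
    (Set.ncard {g : (S \ w : Finset (ℤ × ℤ)) → A |
        ∃ u v : ℤ × ℤ,
          (∀ x : (S \ w : Finset (ℤ × ℤ)), g x = η ((x : ℤ × ℤ) + u)) ∧
          (∀ x : (S \ w : Finset (ℤ × ℤ)), g x = η ((x : ℤ × ℤ) + v)) ∧
          ∃ y ∈ S, η (y + u) ≠ η (y + v)} : ℤ)
      ≤ (w ∩ S).card - 1 := by
  have hcount := Pcx_add_ncard_nonuniqueExtensions_le η (Finset.sdiff_subset : S \ w ⊆ S)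
  rw [Dcx, Dcx, Finset.card_sdiff_of_subset hw, Nat.cast_sub (Finset.card_le_card hw)] at hD
  rw [Finset.inter_eq_left.2 hw]
  omega
end

section
/- (Morse–Hedlund, one-sided eventual periodicity) Let α : ℕ → C be a sequence in a set C, and suppose there exists n ∈ ℕ such that the number of distinct words α(m)α(m+1)⋯α(m+n−1) of length n occurring in α is at most n. Then α is eventually periodic with period at most n, and the initial non-periodic portion has length at most n. -/
/-!
The number of words of length `k` is monotone in `k`, equals `1` at `k = 0` and is at most `n`
at `k = n`, so it stalls at some `k < n`. Then every word of length `k` has a unique right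
extension, i.e. the next letter is a function of the preceding `k` letters. By pigeonhole two of
the `n + 1` windows of length `n` starting at `0, …, n` coincide, say at `a` and `a + p`; since
`k ≤ n`, induction along the sequence propagates `α (m + p) = α m` to all `m ≥ a`.
-/

open Set

namespace MorseHedlund

variable {C : Type*} (α : ℕ → C)

def window (k m : ℕ) : Fin k → C := fun i => α (m + i)

def words (k : ℕ) : Set (Fin k → C) := range (window α k)

lemma init_window (k m : ℕ) : Fin.init (window α (k + 1) m) = window α k m := rfl

lemma words_eq_image_init (k : ℕ) : words α k = Fin.init '' words α (k + 1) := by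
  rw [words, words, ← range_comp]
  rfl

lemma ncard_words_zero : (words α 0).ncard = 1 :=
  ncard_eq_one.2 ⟨_, subsingleton_of_subsingleton.eq_singleton_of_mem (mem_range_self 0)⟩

variable [Finite C]

lemma monotone_ncard_words : Monotone fun k => (words α k).ncard :=
  monotone_nat_of_le_succ fun k => (words_eq_image_init α k).symm ▸ ncard_image_le

/-- Equal counts make `Fin.init` injective on words of length `k + 1`: each word of length `k`
has a unique right extension. -/
lemma apply_add_eq_of_window_eq {k : ℕ} (hk : (words α k).ncard = (words α (k + 1)).ncard)
    {m m' : ℕ} (hw : window α k m = window α k m') : α (m + k) = α (m' + k) := by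
  have hinj : InjOn Fin.init (words α (k + 1)) :=
    injOn_of_ncard_image_eq ((words_eq_image_init α k) ▸ hk)
  have := hinj (mem_range_self m) (mem_range_self m')
    (by rwa [init_window, init_window])
  exact congrFun this (Fin.last k)

lemma exists_window_eq_of_ncard_words_le {n : ℕ} (h : (words α n).ncard ≤ n) :
    ∃ a p, 0 < p ∧ a + p ≤ n ∧ window α n a = window α n (a + p) := by
  obtain ⟨x, hx, y, hy, hxy, hw⟩ := exists_ne_map_eq_of_ncard_lt_of_maps_to
    (s := Iic n) (t := words α n) (by rw [ncard_Iic_nat]; omega)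
    (fun m _ => mem_range_self (f := window α n) m)
  rw [mem_Iic] at hx hy
  rcases lt_or_gt_of_ne hxy with hlt | hlt
  · exact ⟨x, y - x, by omega, by omega, by rwa [Nat.add_sub_cancel' hlt.le]⟩
  · exact ⟨y, x - y, by omega, by omega, by rwa [Nat.add_sub_cancel' hlt.le, eq_comm]⟩

lemma apply_add_eq_of_window_eq_window {k n a p : ℕ} (hkn : k ≤ n)
    (hk : (words α k).ncard = (words α (k + 1)).ncard)
    (hrep : window α n a = window α n (a + p)) (m : ℕ) (ham : a ≤ m) : α (m + p) = α m := by
  induction m using Nat.strong_induction_on with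
  | _ m ih =>
  by_cases hm : m < a + n
  · have := congrFun hrep ⟨m - a, by omega⟩
    simp only [window] at this
    rwa [Nat.add_sub_cancel' ham, add_right_comm, Nat.add_sub_cancel' ham, eq_comm] at this
  · have hw : window α k (m - k) = window α k (m - k + p) := funext fun i => by
      simp only [window]
      rw [add_right_comm, ih _ (by omega) (by omega)]
    have := apply_add_eq_of_window_eq α hk hw
    rwa [Nat.sub_add_cancel (by omega), add_right_comm, Nat.sub_add_cancel (by omega),
      eq_comm] at this

end MorseHedlund

lemma Nat.exists_lt_eq_succ_of_monotone {f : ℕ → ℕ} (hf : Monotone f) (h0 : 1 ≤ f 0) :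
    ∀ {n : ℕ}, f n ≤ n → ∃ k < n, f k = f (k + 1)
  | 0, hn => by omega
  | n + 1, hn => by
    by_cases heq : f n = f (n + 1)
    · exact ⟨n, n.lt_succ_self, heq⟩
    · obtain ⟨k, hk, hfk⟩ := exists_lt_eq_succ_of_monotone hf h0
        (n := n) (by have : f n ≤ f (n + 1) := hf n.le_succ; omega)
      exact ⟨k, hk.trans n.lt_succ_self, hfk⟩

/-- one-sided Morse–Hedlund, eventual periodicity: if the number of
distinct words of length n occurring in α : ℕ → C is at most n, then α is eventually
periodic with period at most n and the initial non-periodic portion has length at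
most n. -/
theorem stmt_8 {C : Type*} [Finite C] (α : ℕ → C) (n : ℕ)
    (h : Set.ncard {w : Fin n → C | ∃ m : ℕ, ∀ i : Fin n, w i = α (m + i)} ≤ n) :
    ∃ p N : ℕ, 1 ≤ p ∧ p ≤ n ∧ N ≤ n ∧ ∀ m : ℕ, N ≤ m → α (m + p) = α m := by
  open MorseHedlund in
  have hcount : (words α n).ncard ≤ n := by
    convert h using 2
    ext w
    simp [words, window, funext_iff, eq_comm]
  obtain ⟨k, hkn, hk⟩ :=
    Nat.exists_lt_eq_succ_of_monotone (monotone_ncard_words α) (ncard_words_zero α).ge hcount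
  obtain ⟨a, p, hp, hapn, hrep⟩ := exists_window_eq_of_ncard_words_le α hcount
  exact ⟨p, a, hp, by omega, by omega, apply_add_eq_of_window_eq_window α hkn.le hk hrep⟩
end

section
/- Let η : ℤ² → A with A finite, and suppose ℓ is a nonexpansive line for η. Then at least one of the two orientations on ℓ determines a nonexpansive direction for η: there exist f ≠ g in X_η agreeing on a half-plane whose boundary is parallel to ℓ. -/
def lineSet (a d : ℝ × ℝ) : Set (ℝ × ℝ) := {p | ∃ t : ℝ, p = a + t • d}

def IsExpansiveLine {A : Type*} (X : Set ((ℤ × ℤ) → A)) (ℓ : Set (ℝ × ℝ)) : Prop :=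
  ∃ r : ℝ, 0 < r ∧ ∀ f ∈ X, ∀ g ∈ X,
    (∀ p : ℤ × ℤ, Metric.infDist (((p.1 : ℝ), (p.2 : ℝ)) : ℝ × ℝ) ℓ < r → f p = g p) →
    f = g

def orbitClosure {A : Type*} [TopologicalSpace A] (η : ℤ × ℤ → A) :
    Set ((ℤ × ℤ) → A) :=
  closure {g : (ℤ × ℤ) → A | ∃ u : ℤ × ℤ, g = fun x => η (x + u)}

/-!
Let `s(p) = d × p` be the signed (scaled) distance of `p` from the line `ℝ d`. Nonexpansiveness
gives pairs `f ≠ g` in `X_η` agreeing on ever wider strips `|s| ≤ n`; let `p` be a disagreement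
with `|s(p)|` minimal. Infinitely often `s(p)` has the same sign, say positive. Translating by
a lattice vector (Bézout) moves `p` to a fixed point `q₀` with `s(q₀) = gcd d`, and the pair then
agrees on a slab `-m ≤ s ≤ 0` with `m → ∞`. A limit pair, which exists by compactness of `X_η`,
still disagrees at `q₀` and agrees on the whole half-plane `s ≤ 0`.
-/

open Filter Set Topology

def cross (d p : ℤ × ℤ) : ℤ := d.1 * p.2 - d.2 * p.1

lemma cross_add (d p q : ℤ × ℤ) : cross d (p + q) = cross d p + cross d q := by
  simp only [cross, Prod.fst_add, Prod.snd_add]; ring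

lemma cross_sub (d p q : ℤ × ℤ) : cross d (p - q) = cross d p - cross d q := by
  simp only [cross, Prod.fst_sub, Prod.snd_sub]; ring

lemma cross_neg_left (d p : ℤ × ℤ) : cross (-d) p = -cross d p := by
  simp only [cross, Prod.fst_neg, Prod.snd_neg]; ring

lemma gcd_dvd_cross (d p : ℤ × ℤ) : (Int.gcd d.1 d.2 : ℤ) ∣ cross d p :=
  dvd_sub (dvd_mul_of_dvd_left (Int.gcd_dvd_left _ _) _)
    (dvd_mul_of_dvd_left (Int.gcd_dvd_right _ _) _)

lemma exists_cross_eq_gcd (d : ℤ × ℤ) : ∃ q, cross d q = Int.gcd d.1 d.2 :=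
  ⟨(-Int.gcdB d.1 d.2, Int.gcdA d.1 d.2), by rw [Int.gcd_eq_gcd_ab]; simp only [cross]; ring⟩

lemma gcd_fst_snd_pos {d : ℤ × ℤ} (hd : d ≠ 0) : 0 < Int.gcd d.1 d.2 :=
  Int.gcd_pos_iff.2 (by contrapose! hd; exact Prod.ext hd.1 hd.2)

lemma infDist_lineSet_zero_le (d x : ℝ × ℝ) (hd : 1 ≤ |d.1| ∨ 1 ≤ |d.2|) :
    Metric.infDist x (lineSet 0 d) ≤ |d.1 * x.2 - d.2 * x.1| := by
  rcases hd with h | h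
  · have h0 : d.1 ≠ 0 := abs_pos.1 (by linarith)
    have e1 : x.1 - x.1 / d.1 * d.1 = 0 := by field_simp; ring
    have e2 : x.2 - x.1 / d.1 * d.2 = (d.1 * x.2 - d.2 * x.1) / d.1 := by field_simp
    calc Metric.infDist x (lineSet 0 d) ≤ dist x ((x.1 / d.1) • d) :=
          Metric.infDist_le_dist_of_mem ⟨_, (zero_add _).symm⟩
      _ = |(d.1 * x.2 - d.2 * x.1) / d.1| := by
          rw [Prod.dist_eq, Real.dist_eq, Real.dist_eq, Prod.smul_fst, Prod.smul_snd,
            smul_eq_mul, smul_eq_mul, e1, e2, abs_zero]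
          exact max_eq_right (abs_nonneg _)
      _ ≤ _ := by rw [abs_div]; exact div_le_self (abs_nonneg _) h
  · have h0 : d.2 ≠ 0 := abs_pos.1 (by linarith)
    have e1 : x.1 - x.2 / d.2 * d.1 = -(d.1 * x.2 - d.2 * x.1) / d.2 := by field_simp; ring
    have e2 : x.2 - x.2 / d.2 * d.2 = 0 := by field_simp; ring
    calc Metric.infDist x (lineSet 0 d) ≤ dist x ((x.2 / d.2) • d) :=
          Metric.infDist_le_dist_of_mem ⟨_, (zero_add _).symm⟩
      _ = |-(d.1 * x.2 - d.2 * x.1) / d.2| := by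
          rw [Prod.dist_eq, Real.dist_eq, Real.dist_eq, Prod.smul_fst, Prod.smul_snd,
            smul_eq_mul, smul_eq_mul, e1, e2, abs_zero]
          exact max_eq_left (abs_nonneg _)
      _ ≤ _ := by rw [abs_div, abs_neg]; exact div_le_self (abs_nonneg _) h

lemma infDist_lineSet_zero_le_abs_cross {d : ℤ × ℤ} (hd : d ≠ 0) (p : ℤ × ℤ) :
    Metric.infDist (((p.1 : ℝ), (p.2 : ℝ)) : ℝ × ℝ)
      (lineSet 0 (((d.1 : ℝ), (d.2 : ℝ)) : ℝ × ℝ)) ≤ |(cross d p : ℝ)| := by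
  have hd' : d.1 ≠ 0 ∨ d.2 ≠ 0 := by contrapose! hd; exact Prod.ext hd.1 hd.2
  convert infDist_lineSet_zero_le _ _ ?_ using 2
  · push_cast [cross]; rfl
  · rcases hd' with h | h
    · exact Or.inl (show (1 : ℝ) ≤ |(d.1 : ℝ)| by exact_mod_cast Int.one_le_abs h)
    · exact Or.inr (show (1 : ℝ) ≤ |(d.2 : ℝ)| by exact_mod_cast Int.one_le_abs h)

lemma forall_or_forall_of_antitone {P Q : ℕ → Prop} (hP : Antitone P) (hQ : Antitone Q)
    (h : ∀ m, P m ∨ Q m) : (∀ m, P m) ∨ ∀ m, Q m := by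
  by_contra! ⟨⟨a, ha⟩, ⟨b, hb⟩⟩
  rcases h (max a b) with hm | hm
  · exact ha (hP (le_max_left a b) hm)
  · exact hb (hQ (le_max_right a b) hm)

lemma exists_ne_forall_lt_eq {ι α : Type*} (σ : ι → ℕ) {f g : ι → α} (h : f ≠ g) :
    ∃ p, f p ≠ g p ∧ ∀ q, σ q < σ p → f q = g q := by
  obtain ⟨p, hp, hmin⟩ := (measure σ).wf.has_min {p | f p ≠ g p} (Function.ne_iff.1 h)
  exact ⟨p, hp, fun q hq => by_contra fun hne => hmin q hne hq⟩

lemma exists_ne_eqOn_of_forall_exists {ι A : Type*} [TopologicalSpace A] [DiscreteTopology A]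
    {X : Set (ι → A)} (hX : IsCompact X) {q₀ : ι} {S : ℕ → Set ι} {T : Set ι}
    (hST : ∀ q ∈ T, ∀ᶠ m in atTop, q ∈ S m)
    (H : ∀ m, ∃ F ∈ X, ∃ G ∈ X, F q₀ ≠ G q₀ ∧ EqOn F G (S m)) :
    ∃ f ∈ X, ∃ g ∈ X, f q₀ ≠ g q₀ ∧ EqOn f g T := by
  choose F hF G hG hne heq using H
  obtain ⟨⟨f, g⟩, ⟨hf, hg⟩, hclus⟩ :=
    (hX.prod hX).exists_mapClusterPt (u := fun m => (F m, G m)) (f := atTop)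
      (tendsto_principal.2 (Eventually.of_forall fun m => ⟨hF m, hG m⟩))
  have hcoord : ∀ q, ∀ᶠ x in 𝓝 (f, g), x.1 q = f q ∧ x.2 q = g q := fun q => by
    have h := (show Continuous fun x : (ι → A) × (ι → A) => (x.1 q, x.2 q) by
      fun_prop).tendsto (f, g)
    rw [nhds_discrete (A × A), tendsto_pure] at h
    simpa only [Prod.mk.injEq] using h
  refine ⟨f, hf, g, hg, fun hq₀ => ?_, fun q hq => ?_⟩
  · obtain ⟨n, hFn, hGn⟩ := (mapClusterPt_iff_frequently.1 hclus _ (hcoord q₀)).exists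
    exact hne n (hFn.trans (hq₀.trans hGn.symm))
  · obtain ⟨n, ⟨hFn, hGn⟩, hqS⟩ :=
      ((mapClusterPt_iff_frequently.1 hclus _ (hcoord q)).and_eventually (hST q hq)).exists
    exact hFn.symm.trans ((heq n hqS).trans hGn)

section Disagreement

variable {A : Type*} (X : Set (ℤ × ℤ → A))

def DisagreesFirstBeyond (e : ℤ × ℤ) (m : ℕ) : Prop :=
  ∃ f ∈ X, ∃ g ∈ X, ∃ p, f p ≠ g p ∧ (m : ℤ) < cross e p ∧
    ∀ q, |cross e q| < cross e p → f q = g q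

lemma antitone_disagreesFirstBeyond (e : ℤ × ℤ) : Antitone (DisagreesFirstBeyond X e) :=
  fun _ _ hmn ⟨f, hf, g, hg, p, hp, hm, hfg⟩ =>
    ⟨f, hf, g, hg, p, hp, lt_of_le_of_lt (by exact_mod_cast hmn) hm, hfg⟩

variable {X}

lemma exists_ne_eqOn_strip_of_not_isExpansiveLine {d : ℤ × ℤ} (hd : d ≠ 0)
    (hne : ¬ IsExpansiveLine X (lineSet 0 (((d.1 : ℝ), (d.2 : ℝ)) : ℝ × ℝ))) (n : ℕ) :
    ∃ f ∈ X, ∃ g ∈ X, f ≠ g ∧ ∀ p, |cross d p| ≤ n → f p = g p := by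
  unfold IsExpansiveLine at hne
  push Not at hne
  obtain ⟨f, hf, g, hg, hfg, hne⟩ := hne (n + 1) (by positivity)
  refine ⟨f, hf, g, hg, hne, fun p hp => hfg p ?_⟩
  have hp' : |(cross d p : ℝ)| ≤ n := by exact_mod_cast hp
  linarith [infDist_lineSet_zero_le_abs_cross hd p]

lemma disagreesFirstBeyond_or_neg {d : ℤ × ℤ}
    (H : ∀ n : ℕ, ∃ f ∈ X, ∃ g ∈ X, f ≠ g ∧ ∀ p, |cross d p| ≤ n → f p = g p) (m : ℕ) :
    DisagreesFirstBeyond X d m ∨ DisagreesFirstBeyond X (-d) m := by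
  obtain ⟨f, hf, g, hg, hne, hstrip⟩ := H m
  obtain ⟨p, hp, hmin⟩ := exists_ne_forall_lt_eq (fun q => (cross d q).natAbs) hne
  have hmin' : ∀ q, |cross d q| < |cross d p| → f q = g q := fun q hq =>
    hmin q (by simpa only [Int.abs_eq_natAbs, Nat.cast_lt] using hq)
  have hfar : (m : ℤ) < |cross d p| := lt_of_not_ge fun h => hp (hstrip p h)
  rcases le_or_gt 0 (cross d p) with hpos | hneg
  · rw [abs_of_nonneg hpos] at hfar hmin'
    exact Or.inl ⟨f, hf, g, hg, p, hp, hfar, hmin'⟩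
  · rw [abs_of_neg hneg, ← cross_neg_left] at hfar hmin'
    refine Or.inr ⟨f, hf, g, hg, p, hp, hfar, fun q hq => hmin' q ?_⟩
    rwa [cross_neg_left, abs_neg] at hq

lemma exists_ne_eqOn_halfPlane [TopologicalSpace A] [DiscreteTopology A] (hX : IsCompact X)
    (hshift : ∀ f ∈ X, ∀ u : ℤ × ℤ, (fun x => f (x + u)) ∈ X) {e : ℤ × ℤ} (he : e ≠ 0)
    (H : ∀ m, DisagreesFirstBeyond X e m) :
    ∃ f ∈ X, ∃ g ∈ X, f ≠ g ∧ ∀ p, cross e p ≤ 0 → f p = g p := by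
  obtain ⟨q₀, hq₀⟩ := exists_cross_eq_gcd e
  have hgcd : (0 : ℤ) < Int.gcd e.1 e.2 := by exact_mod_cast gcd_fst_snd_pos he
  obtain ⟨f, hf, g, hg, hfg, heq⟩ := exists_ne_eqOn_of_forall_exists hX (q₀ := q₀)
    (S := fun m => {q | -(m : ℤ) ≤ cross e q ∧ cross e q ≤ 0}) (T := {q | cross e q ≤ 0})
    (fun q hq => (eventually_ge_atTop (cross e q).natAbs).mono fun m hm =>
      ⟨by omega, hq⟩) fun m => by
    obtain ⟨f, hf, g, hg, p, hp, hm, hfg⟩ := H m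
    have hgcd_le : (Int.gcd e.1 e.2 : ℤ) ≤ cross e p :=
      Int.le_of_dvd (by omega) (gcd_dvd_cross e p)
    have hcross : ∀ q, cross e (q + (p - q₀)) = cross e q + cross e p - Int.gcd e.1 e.2 :=
      fun q => by rw [cross_add, cross_sub, hq₀, add_sub_assoc]
    refine ⟨_, hshift f hf (p - q₀), _, hshift g hg (p - q₀), by simpa only [add_sub_cancel],
      fun q ⟨hq₁, hq₂⟩ => hfg _ ?_⟩
    rw [hcross, abs_lt]
    constructor <;> omega
  exact ⟨f, hf, g, hg, fun h => hfg (by rw [h]), heq⟩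

end Disagreement

lemma shift_mem_orbitClosure {A : Type*} [TopologicalSpace A] (η : ℤ × ℤ → A)
    {f : ℤ × ℤ → A} (hf : f ∈ orbitClosure η) (u : ℤ × ℤ) :
    (fun x => f (x + u)) ∈ orbitClosure η := by
  refine MapsTo.closure (f := fun (h : ℤ × ℤ → A) x => h (x + u)) ?_
    (continuous_pi fun x => continuous_apply (x + u)) hf
  rintro _ ⟨v, rfl⟩
  exact ⟨u + v, funext fun x => by simp only [add_assoc]⟩

lemma isCompact_orbitClosure {A : Type*} [TopologicalSpace A] [Finite A] (η : ℤ × ℤ → A) :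
    IsCompact (orbitClosure η) :=
  isClosed_closure.isCompact

/-- if the rational line through the origin with integer direction d is
a nonexpansive line for η, then at least one of its two orientations determines a
nonexpansive direction for η: there are f ≠ g in X_η agreeing on a half-plane
bounded by a line through the origin parallel to d. -/
theorem stmt_13 {A : Type*} [Fintype A] [TopologicalSpace A] [DiscreteTopology A]
    (η : ℤ × ℤ → A) (d : ℤ × ℤ) (hd : d ≠ 0)
    (hne : ¬ IsExpansiveLine (orbitClosure η)
      (lineSet 0 (((d.1 : ℝ), (d.2 : ℝ)) : ℝ × ℝ))) :
    ∃ f g : (ℤ × ℤ) → A, f ∈ orbitClosure η ∧ g ∈ orbitClosure η ∧ f ≠ g ∧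
      ((∀ p : ℤ × ℤ, 0 ≤ d.1 * p.2 - d.2 * p.1 → f p = g p) ∨
       (∀ p : ℤ × ℤ, 0 ≤ -(d.1 * p.2 - d.2 * p.1) → f p = g p)) := by
  have hhalf := fun e => exists_ne_eqOn_halfPlane (e := e) (isCompact_orbitClosure η)
    (fun f hf u => shift_mem_orbitClosure η hf u)
  rcases forall_or_forall_of_antitone (antitone_disagreesFirstBeyond _ d)
      (antitone_disagreesFirstBeyond _ (-d))
      (disagreesFirstBeyond_or_neg (exists_ne_eqOn_strip_of_not_isExpansiveLine hd hne)) with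
    h | h
  · obtain ⟨f, hf, g, hg, hfg, heq⟩ := hhalf d hd h
    exact ⟨f, g, hf, hg, hfg, Or.inr fun p hp => heq p (by simp only [cross]; linarith)⟩
  · obtain ⟨f, hf, g, hg, hfg, heq⟩ := hhalf (-d) (neg_ne_zero.2 hd) h
    exact ⟨f, g, hf, hg, hfg, Or.inl fun p hp => heq p (by rw [cross_neg_left, cross]; linarith)⟩
end

section
/- Let η : ℤ² → A with A finite, suppose P_η(R_{n,3}) ≤ 3n for some n, and assume D_η(R_{n,3}) ≤ 0. Then there exists a convex set S ⊆ R_{n,3}, minimal with respect to inclusion among convex subsets of R_{n,3} with nonpositive discrepancy, and for such minimal S every boundary vertex of S is η-generated by S (i.e. S is an η-generating set), and moreover every nonempty convex proper subset S′ ⊂ S satisfies D_η(S′) ≥ D_η(S) + 1. -/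
def Generated {A : Type*} (η : ℤ × ℤ → A) (S : Finset (ℤ × ℤ)) (x : ℤ × ℤ) : Prop :=
  ∀ u v : ℤ × ℤ, (∀ y ∈ S.erase x, η (y + u) = η (y + v)) → η (x + u) = η (x + v)

/-- The embedding ℤ² → ℝ². -/
def toR2 (q : ℤ × ℤ) : ℝ × ℝ := ((q.1 : ℝ), (q.2 : ℝ))

/-- S ⊆ ℤ² is convex if S = conv(S) ∩ ℤ². -/
def IsConvexSet (S : Finset (ℤ × ℤ)) : Prop :=
  ∀ p : ℤ × ℤ, toR2 p ∈ convexHull ℝ (toR2 '' (S : Set (ℤ × ℤ))) → p ∈ S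

/-- x is a boundary vertex of S: a vertex of the polygon ∂ conv(S). -/
def IsBoundaryVertex (S : Finset (ℤ × ℤ)) (x : ℤ × ℤ) : Prop :=
  x ∈ S ∧ toR2 x ∉ convexHull ℝ (toR2 '' ((S.erase x : Finset (ℤ × ℤ)) : Set (ℤ × ℤ)))

/-- The rectangle R_{n,k} = {0,…,n−1} × {0,…,k−1}. -/
def Rnk (n k : ℕ) : Finset (ℤ × ℤ) :=
  (Finset.range n ×ˢ Finset.range k).image (fun p : ℕ × ℕ => ((p.1 : ℤ), (p.2 : ℤ)))

section Convexity

theorem isConvexSet_of_forall_mem_iff {S : Finset (ℤ × ℤ)} {C : Set (ℝ × ℝ)} (hC : Convex ℝ C)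
    (hS : ∀ p, p ∈ S ↔ toR2 p ∈ C) : IsConvexSet S := fun p hp =>
  (hS p).2 <| convexHull_min (by rintro _ ⟨q, hq, rfl⟩; exact (hS q).1 hq) hC hp

theorem mem_Rnk_iff_toR2_mem_Icc {n k : ℕ} {p : ℤ × ℤ} :
    p ∈ Rnk n k ↔ toR2 p ∈ Set.Icc (0 : ℝ × ℝ) ((n : ℝ) - 1, (k : ℝ) - 1) := by
  have cast_le_sub_one (a : ℤ) (m : ℕ) : (a : ℝ) ≤ (m : ℝ) - 1 ↔ a < m := by
    rw [← Int.cast_natCast, ← Int.cast_one, ← Int.cast_sub, Int.cast_le]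
    omega
  simp only [Rnk, Finset.mem_image, Finset.mem_product, Finset.mem_range, Prod.exists,
    Set.mem_Icc, Prod.le_def, toR2, Prod.fst_zero, Prod.snd_zero, Int.cast_nonneg_iff,
    cast_le_sub_one]
  constructor
  · rintro ⟨a, b, ⟨ha, hb⟩, rfl⟩
    omega
  · rintro ⟨⟨h1, h2⟩, h3, h4⟩
    exact ⟨p.1.toNat, p.2.toNat, ⟨by omega, by omega⟩, by ext <;> simp [h1, h2]⟩

theorem isConvexSet_Rnk (n k : ℕ) : IsConvexSet (Rnk n k) :=
  isConvexSet_of_forall_mem_iff (convex_Icc _ _) fun _ => mem_Rnk_iff_toR2_mem_Icc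

theorem IsConvexSet.erase {S : Finset (ℤ × ℤ)} {x : ℤ × ℤ} (hS : IsConvexSet S)
    (hx : IsBoundaryVertex S x) : IsConvexSet (S.erase x) := by
  intro p hp
  have hpS : p ∈ S := hS p (convexHull_mono (Set.image_mono (by simp)) hp)
  rcases eq_or_ne p x with rfl | hpx
  · exact absurd hp hx.2
  · exact Finset.mem_erase.2 ⟨hpx, hpS⟩

end Convexity

section Patterns

variable {A : Type*} (η : ℤ × ℤ → A)

def patterns (S : Finset (ℤ × ℤ)) : Set (S → A) :=
  {g : S → A | ∃ u : ℤ × ℤ, ∀ x : S, g x = η ((x : ℤ × ℤ) + u)}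

theorem Pcx_eq_ncard_patterns (S : Finset (ℤ × ℤ)) : Pcx η S = (patterns η S).ncard := rfl

theorem translate_mem_patterns (S : Finset (ℤ × ℤ)) (u : ℤ × ℤ) :
    (fun x : S => η ((x : ℤ × ℤ) + u)) ∈ patterns η S :=
  ⟨u, fun _ => rfl⟩

theorem patterns_eq_image_restrict₂ {S T : Finset (ℤ × ℤ)} (hTS : T ⊆ S) :
    patterns η T = Finset.restrict₂ (π := fun _ => A) hTS '' patterns η S := by
  ext g
  constructor
  · rintro ⟨u, hu⟩
    exact ⟨_, translate_mem_patterns η S u, funext fun y => (hu y).symm⟩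
  · rintro ⟨g, ⟨u, hu⟩, rfl⟩
    exact ⟨u, fun y => hu _⟩

variable [Finite A]

theorem one_le_Pcx (S : Finset (ℤ × ℤ)) : 1 ≤ Pcx η S :=
  (Set.ncard_pos (Set.toFinite _)).2 ⟨_, translate_mem_patterns η S 0⟩

/-- If passing from `S` to `T ⊆ S` does not lower the pattern complexity, restriction of
patterns is injective, so translates of `η` that agree on `T` agree on `S`. -/
theorem eq_of_Pcx_le_of_eqOn {S T : Finset (ℤ × ℤ)} (hTS : T ⊆ S)
    (hle : Pcx η S ≤ Pcx η T) {u v : ℤ × ℤ} (huv : ∀ y ∈ T, η (y + u) = η (y + v))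
    {x : ℤ × ℤ} (hx : x ∈ S) : η (x + u) = η (x + v) := by
  have hinj : Set.InjOn (Finset.restrict₂ (π := fun _ => A) hTS) (patterns η S) := by
    refine Set.injOn_of_ncard_image_eq (le_antisymm (Set.ncard_image_le (Set.toFinite _)) ?_)
    rwa [← patterns_eq_image_restrict₂, ← Pcx_eq_ncard_patterns, ← Pcx_eq_ncard_patterns]
  have := hinj (translate_mem_patterns η S u) (translate_mem_patterns η S v)
    (funext fun y => huv y y.2)
  exact congrFun this ⟨x, hx⟩

theorem two_le_Pcx_singleton [Nontrivial A] (hη : Function.Surjective η) (x : ℤ × ℤ) :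
    2 ≤ Pcx η {x} := by
  obtain ⟨a, b, hab⟩ := exists_pair_ne A
  have const_mem (c : A) : (fun _ : ({x} : Finset (ℤ × ℤ)) => c) ∈ patterns η {x} := by
    obtain ⟨u, hu⟩ := hη c
    refine ⟨u - x, fun y => ?_⟩
    rw [Finset.mem_singleton.mp y.2, add_sub_cancel, hu]
  exact (Set.one_lt_ncard_iff (Set.toFinite _)).2
    ⟨_, _, const_mem a, const_mem b, fun h => hab (congrFun h ⟨x, by simp⟩)⟩

theorem Dcx_pos_of_card_le_one [Nontrivial A] (hη : Function.Surjective η)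
    {S : Finset (ℤ × ℤ)} (hS : S.card ≤ 1) : 0 < Dcx η S := by
  obtain ⟨x, hx⟩ := Finset.card_le_one_iff_subset_singleton.1 hS
  rcases Finset.subset_singleton_iff.1 hx with rfl | rfl
  · have := one_le_Pcx η ∅
    simp only [Dcx, Finset.card_empty]
    omega
  · have := two_le_Pcx_singleton η hη x
    simp only [Dcx, Finset.card_singleton]
    omega

end Patterns

section Minimal

variable {A : Type*} (η : ℤ × ℤ → A)

def ConvexNonposDcx (S : Finset (ℤ × ℤ)) : Prop :=
  S.Nonempty ∧ IsConvexSet S ∧ Dcx η S ≤ 0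

variable {η}

theorem Dcx_add_one_le_of_minimal {S T : Finset (ℤ × ℤ)} (hS : Minimal (ConvexNonposDcx η) S)
    (hTS : T ⊆ S) (hT : T ≠ S) (hTne : T.Nonempty) (hTcv : IsConvexSet T) :
    Dcx η S + 1 ≤ Dcx η T := by
  have : ¬ Dcx η T ≤ 0 := fun h => hT (hS.eq_of_le ⟨hTne, hTcv, h⟩ hTS)
  have := hS.prop.2.2
  omega

theorem generated_of_minimal [Finite A] [Nontrivial A] (hη : Function.Surjective η)
    {S : Finset (ℤ × ℤ)} (hS : Minimal (ConvexNonposDcx η) S) {x : ℤ × ℤ}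
    (hx : IsBoundaryVertex S x) : Generated η S x := by
  obtain ⟨hSne, hScv, hSd⟩ := hS.prop
  have hTne : (S.erase x).Nonempty := by
    rw [Finset.nonempty_iff_ne_empty, Ne, Finset.erase_eq_empty_iff]
    rintro (rfl | rfl)
    · exact Finset.not_nonempty_empty hSne
    · exact hSd.not_gt (Dcx_pos_of_card_le_one η hη (Finset.card_singleton x).le)
  have hle := Dcx_add_one_le_of_minimal hS (Finset.erase_subset x S)
    (Finset.erase_ne_self.2 hx.1) hTne (hScv.erase hx)
  have hcard : ((S.erase x).card : ℤ) = S.card - 1 := by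
    rw [Finset.card_erase_of_mem hx.1, Nat.cast_sub (Finset.card_pos.2 hSne), Nat.cast_one]
  intro u v huv
  refine eq_of_Pcx_le_of_eqOn η (Finset.erase_subset x S) ?_ huv hx.1
  simp only [Dcx, hcard] at hle
  omega

end Minimal

theorem stmt_14_general {A : Type*} [Fintype A] (hA : 2 ≤ Fintype.card A)
    (η : ℤ × ℤ → A) (hall : ∀ a : A, ∃ u : ℤ × ℤ, η u = a)
    (n : ℕ) (hD : Dcx η (Rnk n 3) ≤ 0) :
    ∃ S : Finset (ℤ × ℤ), S ⊆ Rnk n 3 ∧ S.Nonempty ∧ IsConvexSet S ∧ Dcx η S ≤ 0 ∧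
      (∀ S' : Finset (ℤ × ℤ), S' ⊆ S → S'.Nonempty → IsConvexSet S' →
        Dcx η S' ≤ 0 → S' = S) ∧
      (∀ x : ℤ × ℤ, IsBoundaryVertex S x → Generated η S x) ∧
      (∀ S' : Finset (ℤ × ℤ), S' ⊆ S → S' ≠ S → S'.Nonempty → IsConvexSet S' →
        Dcx η S + 1 ≤ Dcx η S') := by
  have : Nontrivial A := Fintype.one_lt_card_iff_nontrivial.1 hA
  have hRne : (Rnk n 3).Nonempty := by
    by_contra h
    rw [Finset.not_nonempty_iff_eq_empty] at h
    exact hD.not_gt (Dcx_pos_of_card_le_one η hall (by simp [h]))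
  obtain ⟨S, hSR, hS⟩ := exists_minimal_le_of_wellFoundedLT (ConvexNonposDcx η) (Rnk n 3)
    ⟨hRne, isConvexSet_Rnk n 3, hD⟩
  obtain ⟨hSne, hScv, hSd⟩ := hS.prop
  exact ⟨S, hSR, hSne, hScv, hSd,
    fun T hTS hTne hTcv hTd => hS.eq_of_le ⟨hTne, hTcv, hTd⟩ hTS,
    fun x hx => generated_of_minimal hall hS hx,
    fun T hTS hT hTne hTcv => Dcx_add_one_le_of_minimal hS hTS hT hTne hTcv⟩

/-- under P_η(R_{n,3}) ≤ 3n (so D_η(R_{n,3}) ≤ 0), there exists a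
convex S ⊆ R_{n,3}, minimal by inclusion among nonempty convex subsets of
nonpositive discrepancy, such that every boundary vertex of S is η-generated by S
(S is an η-generating set), and every nonempty convex proper subset S′ ⊂ S
satisfies D_η(S′) ≥ D_η(S) + 1. -/
theorem stmt_14 {A : Type*} [Fintype A] (hA : 2 ≤ Fintype.card A)
    (η : ℤ × ℤ → A) (hall : ∀ a : A, ∃ u : ℤ × ℤ, η u = a)
    (n : ℕ) (hP : Pcx η (Rnk n 3) ≤ 3 * n) (hD : Dcx η (Rnk n 3) ≤ 0) :
    ∃ S : Finset (ℤ × ℤ), S ⊆ Rnk n 3 ∧ S.Nonempty ∧ IsConvexSet S ∧ Dcx η S ≤ 0 ∧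
      (∀ S' : Finset (ℤ × ℤ), S' ⊆ S → S'.Nonempty → IsConvexSet S' →
        Dcx η S' ≤ 0 → S' = S) ∧
      (∀ x : ℤ × ℤ, IsBoundaryVertex S x → Generated η S x) ∧
      (∀ S' : Finset (ℤ × ℤ), S' ⊆ S → S' ≠ S → S'.Nonempty → IsConvexSet S' →
        Dcx η S + 1 ≤ Dcx η S') :=
  stmt_14_general hA η hall n hD
end
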